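/- arXiv:1902.00967 — 4 statements merged into one kernel-verified Lean document; each statement's English description precedes it below -/
import Mathlib

section
/- Let ρ be a separable state on ℂ^{d_A} ⊗ ℂ^{d_B}, i.e., ρ = ∑_{i ∈ Fin n} p_i • (A_i ⊗ₖ B_i) where each p_i ≥ 0, and each A_i (d_A×d_A) and B_i (d_B×d_B) is positive semidefinite. Then the partial transpose of ρ, defined entrywise by (T^p ρ)((i,μ),(j,ν)) = ρ((j,μ),(i,ν)), is positive semidefinite. Thus positivity of the partial transpose (PPT) is a necessary condition for separability. -/
open Matrix
open scoped Kronecker ComplexOrder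

namespace Matrix

variable {ι κ R : Type*}

def partialTranspose (S : Type*) [Semiring S] [AddCommMonoid R] [Module S R] :
    Matrix (ι × κ) (ι × κ) R →ₗ[S] Matrix (ι × κ) (ι × κ) R where
  toFun X := of fun a b => X (b.1, a.2) (a.1, b.2)
  map_add' _ _ := rfl
  map_smul' _ _ := rfl

theorem partialTranspose_kronecker (S : Type*) [Semiring S] [AddCommMonoid R] [Mul R]
    [Module S R] (A : Matrix ι ι R) (B : Matrix κ κ R) :
    partialTranspose S (A ⊗ₖ B) = Aᵀ ⊗ₖ B :=
  rfl

end Matrix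

/-- PPT criterion (necessity): every separable state has a positive semidefinite
partial transpose. -/
theorem separable_state_partialTranspose_posSemidef
    {dA dB n : ℕ}
    (p : Fin n → ℝ) (hp : ∀ i, 0 ≤ p i)
    (A : Fin n → Matrix (Fin dA) (Fin dA) ℂ)
    (B : Fin n → Matrix (Fin dB) (Fin dB) ℂ)
    (hA : ∀ i, (A i).PosSemidef) (hB : ∀ i, (B i).PosSemidef)
    (ρ : Matrix (Fin dA × Fin dB) (Fin dA × Fin dB) ℂ)
    (hρ : ρ = ∑ i, (p i : ℂ) • (A i ⊗ₖ B i)) :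
    (Matrix.of fun a b => ρ (b.1, a.2) (a.1, b.2) :
      Matrix (Fin dA × Fin dB) (Fin dA × Fin dB) ℂ).PosSemidef := by
  change (partialTranspose ℂ ρ).PosSemidef
  rw [hρ, map_sum]
  refine posSemidef_sum _ fun i _ => ?_
  rw [map_smul, partialTranspose_kronecker]
  exact ((hA i).transpose.kronecker (hB i)).smul (by exact_mod_cast hp i)
end

section
/- Let H_B and B be n×n complex matrices with H_B Hermitian, let ρ_B be a positive semidefinite n×n matrix, and define B(s) = exp(i s H_B) * B * exp(−i s H_B) for s ∈ ℝ and the bath correlation function 𝓑(s,s') = Tr(ρ_B * B(s)† * B(s')). Then for every t ≥ 0, every m, and every family of real frequencies ω : Fin m → ℝ, the m×m matrix b with entries b_{k,l} = ∫₀ᵗ ∫₀ᵗ exp(i(ω_l s − ω_k s')) 𝓑(s,s') ds' ds defines a nonnegative quadratic form: for every w : Fin m → ℂ, the number ∑_{k,l} w_k · conj(w_l) · b_{k,l} is real and nonnegative. (This positivity of the coefficient matrix is what guarantees complete positivity of the coarse-grained Lindblad generator.) -/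
open Matrix
open scoped ComplexOrder

/-!
Factor `ρ_B = Aᴴ A`. By cyclicity of the trace, `𝓑(s,s') = Σ_c conj(φ_c(s)) φ_c(s')` where the
`φ_c` are the entries of `B(s) Aᴴ`, so each double integral separates and `b = F Fᴴ` with
`F_{k,c} = ∫₀ᵗ e^{-iω_k s} φ_c(s) ds`. A Gram matrix is positive semidefinite.
-/

theorem Matrix.PosSemidef.exists_eq_conjTranspose_mul_self {n : Type*} [Fintype n]
    [DecidableEq n] {M : Matrix n n ℂ} (hM : M.PosSemidef) : ∃ A : Matrix n n ℂ, M = Aᴴ * A := by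
  open scoped MatrixOrder Matrix.Norms.L2Operator in
  exact CStarAlgebra.nonneg_iff_eq_star_mul_self.mp hM.nonneg

theorem Matrix.PosSemidef.sum_sum_mul_star_mul_nonneg {n R : Type*} [Fintype n] [CommRing R]
    [PartialOrder R] [StarRing R] {M : Matrix n n R} (hM : M.PosSemidef) (w : n → R) :
    0 ≤ ∑ k, ∑ l, w k * star (w l) * M k l := by
  convert hM.dotProduct_mulVec_nonneg (star w) using 1
  simp only [dotProduct, mulVec, Pi.star_apply, star_star, Finset.mul_sum]
  exact Finset.sum_congr rfl fun k _ => Finset.sum_congr rfl fun l _ => by ring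

theorem Matrix.trace_conjTranspose_mul_self_mul_conjTranspose_mul {n R : Type*} [Fintype n]
    [CommRing R] [StarRing R] (A X Y : Matrix n n R) :
    (Aᴴ * A * Xᴴ * Y).trace = star (vec (X * Aᴴ)) ⬝ᵥ vec (Y * Aᴴ) := by
  rw [star_vec_dotProduct_vec, conjTranspose_mul, conjTranspose_conjTranspose,
    Matrix.mul_assoc, Matrix.mul_assoc, trace_mul_comm, ← Matrix.mul_assoc, Matrix.mul_assoc]

theorem Matrix.continuous_exp_smul {𝕜 n : Type*} [RCLike 𝕜] [Fintype n] [DecidableEq n]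
    (A : Matrix n n 𝕜) : Continuous fun z : 𝕜 => NormedSpace.exp (z • A) := by
  open scoped Matrix.Norms.L2Operator in
  let _ : NormedAlgebra ℚ (Matrix n n 𝕜) := NormedAlgebra.restrictScalars ℚ 𝕜 _
  exact NormedSpace.exp_continuous.comp (continuous_id.smul continuous_const)

theorem intervalIntegral.integral_integral_sum_mul {𝕜 ι : Type*} [RCLike 𝕜] (s : Finset ι)
    {f h : ι → ℝ → 𝕜} {a b a' b' : ℝ}
    (hf : ∀ c ∈ s, IntervalIntegrable (f c) MeasureTheory.volume a b)
    (hh : ∀ c ∈ s, IntervalIntegrable (h c) MeasureTheory.volume a' b') :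
    ∫ x in a..b, ∫ y in a'..b', ∑ c ∈ s, f c x * h c y =
      ∑ c ∈ s, (∫ x in a..b, f c x) * ∫ y in a'..b', h c y := by
  have inner (x : ℝ) : ∫ y in a'..b', ∑ c ∈ s, f c x * h c y =
      ∑ c ∈ s, f c x * ∫ y in a'..b', h c y := by
    simp only [integral_finsetSum fun c hc => (hh c hc).const_mul _, integral_const_mul]
  simp only [inner, integral_finsetSum fun c hc => (hf c hc).mul_const _, integral_mul_const]

noncomputable def truncatedFourierMatrix {ι κ : Type*} (t : ℝ) (ω : κ → ℝ) (φ : ℝ → ι → ℂ) :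
    Matrix κ ι ℂ :=
  of fun k c => ∫ s in (0 : ℝ)..t, Complex.exp (-(Complex.I * (ω k * s))) * φ s c

theorem integral_integral_exp_mul_star_dotProduct {ι κ : Type*} [Fintype ι] {φ : ℝ → ι → ℂ}
    (hφ : Continuous φ) (t : ℝ) (ω : κ → ℝ) (k l : κ) :
    ∫ s in (0 : ℝ)..t, ∫ s' in (0 : ℝ)..t,
        Complex.exp (Complex.I * ((ω l : ℂ) * s - (ω k : ℂ) * s')) * (star (φ s) ⬝ᵥ φ s') =
      (truncatedFourierMatrix t ω φ * (truncatedFourierMatrix t ω φ)ᴴ) k l := by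
  set e : κ → ℝ → ℂ := fun j s => Complex.exp (-(Complex.I * (ω j * s)))
  have he (j) : Continuous (e j) := by fun_prop
  have hφc (c) : Continuous fun s => φ s c := (continuous_apply c).comp hφ
  have hintegrand (s s' : ℝ) :
      Complex.exp (Complex.I * ((ω l : ℂ) * s - (ω k : ℂ) * s')) * (star (φ s) ⬝ᵥ φ s') =
        ∑ c, star (e l s * φ s c) * (e k s' * φ s' c) := by
    have hsplit : Complex.exp (Complex.I * ((ω l : ℂ) * s - (ω k : ℂ) * s')) =
        star (e l s) * e k s' := by
      simp only [e, Complex.star_def, ← Complex.exp_conj, ← Complex.exp_add, map_neg, map_mul,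
        Complex.conj_I, Complex.conj_ofReal]
      ring_nf
    simp only [dotProduct, Pi.star_apply, hsplit, Finset.mul_sum, star_mul]
    exact Finset.sum_congr rfl fun c _ => by ring
  calc _ = ∫ s in (0 : ℝ)..t, ∫ s' in (0 : ℝ)..t,
        ∑ c, star (e l s * φ s c) * (e k s' * φ s' c) := by simp only [hintegrand]
    _ = ∑ c, (∫ s in (0 : ℝ)..t, star (e l s * φ s c)) * ∫ s' in (0 : ℝ)..t, e k s' * φ s' c :=
        intervalIntegral.integral_integral_sum_mul _
          (fun c _ => (((he l).mul (hφc c)).star).intervalIntegrable _ _)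
          (fun c _ => ((he k).mul (hφc c)).intervalIntegrable _ _)
    _ = _ := by
        simp only [truncatedFourierMatrix, mul_apply, conjTranspose_apply, of_apply,
          Complex.star_def, intervalIntegral.intervalIntegral_conj]
        exact Finset.sum_congr rfl fun c _ => mul_comm _ _

theorem coarseGrained_rate_matrix_posSemidef_general
    {n m : ℕ} (HB B : Matrix (Fin n) (Fin n) ℂ)
    (ρB : Matrix (Fin n) (Fin n) ℂ) (hρB : ρB.PosSemidef)
    (t : ℝ) (ω : Fin m → ℝ) :
    let Bt : ℝ → Matrix (Fin n) (Fin n) ℂ := fun s =>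
      NormedSpace.exp ((Complex.I * (s : ℂ)) • HB) * B *
        NormedSpace.exp ((-(Complex.I * (s : ℂ))) • HB)
    let corr : ℝ → ℝ → ℂ := fun s s' => (ρB * (Bt s)ᴴ * Bt s').trace
    let b : Fin m → Fin m → ℂ := fun k l =>
      ∫ s in (0 : ℝ)..t, ∫ s' in (0 : ℝ)..t,
        Complex.exp (Complex.I * ((ω l : ℂ) * s - (ω k : ℂ) * s')) * corr s s'
    ∀ w : Fin m → ℂ, 0 ≤ ∑ k, ∑ l, w k * (starRingEnd ℂ) (w l) * b k l := by
  intro Bt corr b w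
  obtain ⟨A, rfl⟩ := hρB.exists_eq_conjTranspose_mul_self
  have hBt : Continuous Bt := by
    have hexp := continuous_exp_smul HB
    exact ((hexp.comp (by fun_prop)).matrix_mul continuous_const).matrix_mul
      (hexp.comp (by fun_prop))
  let φ : ℝ → Fin n × Fin n → ℂ := fun s => vec (Bt s * Aᴴ)
  have hφ : Continuous φ :=
    continuous_pi fun c => (hBt.matrix_mul continuous_const).matrix_elem c.2 c.1
  let F := truncatedFourierMatrix t ω φ
  have hb (k l) : b k l = (F * Fᴴ) k l := by
    simp only [b, corr, trace_conjTranspose_mul_self_mul_conjTranspose_mul,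
      ← integral_integral_exp_mul_star_dotProduct hφ, F, φ]
  simpa only [hb, Complex.star_def] using
    (posSemidef_self_mul_conjTranspose F).sum_sum_mul_star_mul_nonneg w

/-- Positivity of the coarse-grained rate matrix: with `B(s)` the Heisenberg-picture
bath operator and `𝓑(s,s') = Tr(ρ_B B(s)† B(s'))` the bath correlation function, the
matrix `b_{kl} = ∫₀ᵗ∫₀ᵗ e^{i(ω_l s − ω_k s')} 𝓑(s,s') ds' ds` defines a nonnegative
quadratic form. -/
theorem coarseGrained_rate_matrix_posSemidef
    {n m : ℕ} (HB B : Matrix (Fin n) (Fin n) ℂ) (hHB : HBᴴ = HB)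
    (ρB : Matrix (Fin n) (Fin n) ℂ) (hρB : ρB.PosSemidef)
    (t : ℝ) (ht : 0 ≤ t) (ω : Fin m → ℝ) :
    let Bt : ℝ → Matrix (Fin n) (Fin n) ℂ := fun s =>
      NormedSpace.exp ((Complex.I * (s : ℂ)) • HB) * B *
        NormedSpace.exp ((-(Complex.I * (s : ℂ))) • HB)
    let corr : ℝ → ℝ → ℂ := fun s s' => (ρB * (Bt s)ᴴ * Bt s').trace
    let b : Fin m → Fin m → ℂ := fun k l =>
      ∫ s in (0 : ℝ)..t, ∫ s' in (0 : ℝ)..t,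
        Complex.exp (Complex.I * ((ω l : ℂ) * s - (ω k : ℂ) * s')) * corr s s'
    ∀ w : Fin m → ℂ, 0 ≤ ∑ k, ∑ l, w k * (starRingEnd ℂ) (w l) * b k l :=
  coarseGrained_rate_matrix_posSemidef_general HB B ρB hρB t ω
end

section
/- Heisenberg uncertainty principle: let V be a complex inner product space, let C and D be symmetric (self-adjoint) linear operators on V, and let ψ ∈ V be a unit vector. Write ⟨A⟩ = ⟪ψ, A ψ⟫ for the expectation value and ΔA = √(⟪ψ, (A − ⟨A⟩•id)² ψ⟫) for the standard deviation (this inner product is a nonnegative real for symmetric A). Then (ΔC)·(ΔD) ≥ (1/2)·|⟪ψ, (C∘D − D∘C) ψ⟫|. -/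
open scoped InnerProductSpace ComplexConjugate

/-!
Shifting a symmetric operator by a real multiple of the identity keeps it symmetric and does not
change commutators, and `⟨ψ, A² ψ⟩ = ‖A ψ‖²` for symmetric `A`. So it suffices to bound the
commutator of the centred operators `A = C - ⟨C⟩`, `B = D - ⟨D⟩`: by symmetry
`⟨ψ, [A, B] ψ⟩ = z - conj z` with `z = ⟨A ψ, B ψ⟩`, whose norm is at most `2 ‖z‖ ≤ 2 ‖A ψ‖ ‖B ψ‖`
by Cauchy–Schwarz.
-/

namespace LinearMap

theorem commutator_sub_smul_id {R M : Type*} [CommRing R] [AddCommGroup M] [Module R M]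
    (A B : M →ₗ[R] M) (a b : R) :
    (A - a • id) ∘ₗ (B - b • id) - (B - b • id) ∘ₗ (A - a • id) = A ∘ₗ B - B ∘ₗ A := by
  ext x
  simp only [sub_apply, comp_apply, smul_apply, id_apply, map_sub, map_smul, smul_sub,
    smul_smul, mul_comm a b]
  abel

namespace IsSymmetric

variable {𝕜 E : Type*} [RCLike 𝕜] [NormedAddCommGroup E] [InnerProductSpace 𝕜 E]
  {A B : E →ₗ[𝕜] E}

theorem sub_inner_self_smul_id (hA : A.IsSymmetric) (x : E) :
    (A - ⟪x, A x⟫_𝕜 • id).IsSymmetric :=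
  hA.sub (IsSymmetric.id.smul (RCLike.conj_eq_iff_re.mpr (hA.coe_re_inner_self_apply x)))

theorem re_inner_comp_self_apply (hA : A.IsSymmetric) (x : E) :
    RCLike.re ⟪x, (A ∘ₗ A) x⟫_𝕜 = ‖A x‖ ^ 2 := by
  rw [comp_apply, ← hA, inner_self_eq_norm_sq]

theorem norm_inner_commutator_le (hA : A.IsSymmetric) (hB : B.IsSymmetric) (x : E) :
    ‖⟪x, (A ∘ₗ B - B ∘ₗ A) x⟫_𝕜‖ ≤ 2 * (‖A x‖ * ‖B x‖) := by
  have h_comm : ⟪x, (A ∘ₗ B - B ∘ₗ A) x⟫_𝕜 = ⟪A x, B x⟫_𝕜 - conj ⟪A x, B x⟫_𝕜 := by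
    rw [sub_apply, inner_sub_right, comp_apply, comp_apply, ← hA, ← hB, inner_conj_symm]
  calc ‖⟪x, (A ∘ₗ B - B ∘ₗ A) x⟫_𝕜‖
      ≤ ‖⟪A x, B x⟫_𝕜‖ + ‖conj ⟪A x, B x⟫_𝕜‖ := h_comm ▸ norm_sub_le _ _
    _ = 2 * ‖⟪A x, B x⟫_𝕜‖ := by rw [RCLike.norm_conj, two_mul]
    _ ≤ 2 * (‖A x‖ * ‖B x‖) := by gcongr; exact norm_inner_le_norm _ _

end IsSymmetric

end LinearMap

theorem heisenberg_uncertainty_general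
    {V : Type*} [NormedAddCommGroup V] [InnerProductSpace ℂ V]
    (C D : V →ₗ[ℂ] V) (hC : C.IsSymmetric) (hD : D.IsSymmetric)
    (ψ : V) :
    (1 / 2) * ‖(⟪ψ, (C ∘ₗ D - D ∘ₗ C) ψ⟫_ℂ)‖ ≤
      Real.sqrt
        (Complex.re ⟪ψ, ((C - ⟪ψ, C ψ⟫_ℂ • LinearMap.id) ∘ₗ
            (C - ⟪ψ, C ψ⟫_ℂ • LinearMap.id)) ψ⟫_ℂ) *
      Real.sqrt
        (Complex.re ⟪ψ, ((D - ⟪ψ, D ψ⟫_ℂ • LinearMap.id) ∘ₗ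
            (D - ⟪ψ, D ψ⟫_ℂ • LinearMap.id)) ψ⟫_ℂ) := by
  have hC₀ := hC.sub_inner_self_smul_id ψ
  have hD₀ := hD.sub_inner_self_smul_id ψ
  rw [← LinearMap.commutator_sub_smul_id C D ⟪ψ, C ψ⟫_ℂ ⟪ψ, D ψ⟫_ℂ,
    ← RCLike.re_to_complex, hC₀.re_inner_comp_self_apply, ← RCLike.re_to_complex,
    hD₀.re_inner_comp_self_apply, Real.sqrt_sq (norm_nonneg _), Real.sqrt_sq (norm_nonneg _)]
  linarith [hC₀.norm_inner_commutator_le hD₀ ψ]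

/-- Heisenberg uncertainty principle: for symmetric (self-adjoint) operators `C`, `D`
on a complex inner product space and a unit vector `ψ`,
`ΔC · ΔD ≥ ½ |⟨ψ, [C,D] ψ⟩|`, where `ΔA = √⟨ψ, (A − ⟨A⟩)² ψ⟩`. -/
theorem heisenberg_uncertainty
    {V : Type*} [NormedAddCommGroup V] [InnerProductSpace ℂ V]
    (C D : V →ₗ[ℂ] V) (hC : C.IsSymmetric) (hD : D.IsSymmetric)
    (ψ : V) (hψ : ‖ψ‖ = 1) :
    (1 / 2) * ‖(⟪ψ, (C ∘ₗ D - D ∘ₗ C) ψ⟫_ℂ)‖ ≤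
      Real.sqrt
        (Complex.re ⟪ψ, ((C - ⟪ψ, C ψ⟫_ℂ • LinearMap.id) ∘ₗ
            (C - ⟪ψ, C ψ⟫_ℂ • LinearMap.id)) ψ⟫_ℂ) *
      Real.sqrt
        (Complex.re ⟪ψ, ((D - ⟪ψ, D ψ⟫_ℂ • LinearMap.id) ∘ₗ
            (D - ⟪ψ, D ψ⟫_ℂ • LinearMap.id)) ψ⟫_ℂ) :=
  heisenberg_uncertainty_general C D hC hD ψ
end

section
/- Coarse-graining recovers the Markovian rate: let f : ℝ → ℂ be measurable with f(−u) = conj(f(u)) for all u, ∫₀^∞ |f(u)| du < ∞, and ∫₀^∞ u·|f(u)| du < ∞ (a bath correlation function with finite correlation time). Then for every ω ∈ ℝ, the time-averaged double integral converges as the coarse-graining time T → ∞: (1/T) ∫₀ᵀ ∫₀ᵀ e^{i ω (t − s)} f(t − s) ds dt → ∫_{−∞}^{∞} e^{i ω u} f(u) du. That is, the coarse-grained rate γ_{ωω}(T) tends to the Fourier transform γ(ω) of the correlation function. -/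
/-!
Substituting `u = t - s`, the inner integral is `∫_{t-T}^{t} g` with `g u = e^{iωu} f u`;
integrating in `t` and reflecting the shifted part turns the double integral into
`∫₀ᵀ (∫_{-t}^{t} g) dt`. So the coarse-grained rate is the Cesàro mean of the symmetric partial
integrals of `g`, which converge to `∫ g` because `f`, being integrable on `[0, ∞)` and Hermitian,
is integrable on `ℝ`. Those partial integrals are bounded by `∫ ‖g‖`, and after rescaling
`t = T x` the Cesàro mean is `∫₀¹ (∫_{-Tx}^{Tx} g) dx`, so dominated convergence finishes.
-/

open MeasureTheory Filter Set Topology ComplexConjugate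

theorem integrable_of_integrableOn_Ici_of_apply_neg_eq_conj {f : ℝ → ℂ}
    (hsym : ∀ u, f (-u) = conj (f u)) (hf : IntegrableOn f (Ici 0)) : Integrable f := by
  have hIic : IntegrableOn f (Iic 0) := by
    have hneg : IntegrableOn (fun u => f (-u)) (Iic 0) := (neg_zero (G := ℝ) ▸ hf).comp_neg_Iic
    exact IntegrableOn.congr_fun (Complex.conjCLE.toContinuousLinearMap.integrable_comp hneg)
      (fun u _ => by simp [hsym]) measurableSet_Iic
  rw [← integrableOn_univ, ← Iic_union_Ici (a := (0 : ℝ))]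
  exact hIic.union hf

theorem MeasureTheory.LocallyIntegrable.intervalIntegrable {E : Type*} [NormedAddCommGroup E]
    {g : ℝ → E} {μ : Measure ℝ} (hg : LocallyIntegrable g μ) (a b : ℝ) :
    IntervalIntegrable g μ a b :=
  (hg.integrableOn_isCompact isCompact_uIcc).intervalIntegrable

namespace intervalIntegral

variable {E : Type*} [NormedAddCommGroup E] [NormedSpace ℝ E] {g : ℝ → E}

theorem integral_integral_comp_sub (hg : LocallyIntegrable g) (T : ℝ) :
    ∫ t in (0 : ℝ)..T, ∫ s in (0 : ℝ)..T, g (t - s) = ∫ t in (0 : ℝ)..T, ∫ u in -t..t, g u := by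
  set G : ℝ → E := fun t => ∫ u in (0 : ℝ)..t, g u
  have hG : Continuous G := continuous_primitive hg.intervalIntegrable 0
  have hsub : ∀ a b, ∫ u in a..b, g u = G b - G a := fun a b =>
    (integral_interval_sub_left (hg.intervalIntegrable 0 b) (hg.intervalIntegrable 0 a)).symm
  have hinner : ∀ t, ∫ s in (0 : ℝ)..T, g (t - s) = G t - G (t - T) := fun t => by
    rw [integral_comp_sub_left, sub_zero, hsub]
  have hshift : ∫ t in (0 : ℝ)..T, G (t - T) = ∫ t in (0 : ℝ)..T, G (-t) := by
    rw [integral_comp_sub_right, integral_comp_neg, zero_sub, sub_self, neg_zero]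
  have hGshift : Continuous fun t => G (t - T) := by fun_prop
  have hGneg : Continuous fun t => G (-t) := by fun_prop
  simp only [hinner, hsub]
  rw [integral_sub (hG.intervalIntegrable _ _) (hGshift.intervalIntegrable _ _),
    integral_sub (hG.intervalIntegrable _ _) (hGneg.intervalIntegrable _ _), hshift]

theorem continuous_integral_neg_self (hg : LocallyIntegrable g) :
    Continuous fun t => ∫ u in -t..t, g u := by
  have hdiff : (fun t => ∫ u in -t..t, g u) = fun t => (∫ u in 0..t, g u) - ∫ u in 0..-t, g u :=
    funext fun t =>
      (integral_interval_sub_left (hg.intervalIntegrable 0 _) (hg.intervalIntegrable 0 _)).symm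
  rw [hdiff]
  exact (continuous_primitive hg.intervalIntegrable 0).sub
    ((continuous_primitive hg.intervalIntegrable 0).comp continuous_neg)

theorem norm_integral_le_integral_norm_of_integrable (hg : Integrable g) (a b : ℝ) :
    ‖∫ x in a..b, g x‖ ≤ ∫ x, ‖g x‖ :=
  norm_integral_le_integral_norm_uIoc.trans
    (setIntegral_le_integral hg.norm (.of_forall fun _ => norm_nonneg _))

end intervalIntegral

theorem Filter.Tendsto.cesaro_intervalIntegral {E : Type*} [NormedAddCommGroup E]
    [NormedSpace ℝ E] [CompleteSpace E] {h : ℝ → E} {L : E} {C : ℝ} (hc : Continuous h)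
    (hC : ∀ t, ‖h t‖ ≤ C) (hL : Tendsto h atTop (𝓝 L)) :
    Tendsto (fun T => T⁻¹ • ∫ t in (0 : ℝ)..T, h t) atTop (𝓝 L) := by
  have hrescale : ∀ᶠ T in atTop,
      ∫ x in (0 : ℝ)..1, h (T * x) = T⁻¹ • ∫ t in (0 : ℝ)..T, h t := by
    filter_upwards [eventually_gt_atTop 0] with T hT
    rw [intervalIntegral.integral_comp_mul_left _ hT.ne', mul_zero, mul_one]
  have hdom : Tendsto (fun T => ∫ x in (0 : ℝ)..1, h (T * x)) atTop
      (𝓝 (∫ _ in (0 : ℝ)..1, L)) :=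
    intervalIntegral.tendsto_integral_filter_of_dominated_convergence (fun _ => C)
      (.of_forall fun T => (hc.comp (continuous_const_mul T)).aestronglyMeasurable)
      (.of_forall fun T => .of_forall fun x _ => hC _) intervalIntegrable_const
      (.of_forall fun x hx => hL.comp (tendsto_id.atTop_mul_const' (by simpa using hx.1)))
  simpa using hdom.congr' hrescale

theorem coarseGrained_rate_tendsto_fourier_general
    (f : ℝ → ℂ)
    (hsym : ∀ u : ℝ, f (-u) = (starRingEnd ℂ) (f u))
    (hint : IntegrableOn f (Set.Ici 0) volume)
    (ω : ℝ) :
    Tendsto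
      (fun T : ℝ => (1 / (T : ℂ)) *
        ∫ t in (0 : ℝ)..T, ∫ s in (0 : ℝ)..T,
          Complex.exp (Complex.I * (ω : ℂ) * ((t : ℂ) - (s : ℂ))) * f (t - s))
      atTop
      (nhds (∫ u : ℝ, Complex.exp (Complex.I * (ω : ℂ) * (u : ℂ)) * f u)) := by
  set g : ℝ → ℂ := fun u => Complex.exp (Complex.I * ω * u) * f u
  have hg : Integrable g := by
    refine (integrable_of_integrableOn_Ici_of_apply_neg_eq_conj hsym hint).bdd_mul (c := 1)
      (by fun_prop) (.of_forall fun u => ?_)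
    have hphase : Complex.I * ω * u = ((ω * u : ℝ) : ℂ) * Complex.I := by push_cast; ring
    rw [hphase, Complex.norm_exp_ofReal_mul_I]
  have hsymm_lim : Tendsto (fun t => ∫ u in -t..t, g u) atTop (𝓝 (∫ u, g u)) :=
    intervalIntegral_tendsto_integral hg tendsto_neg_atTop_atBot tendsto_id
  have hcesaro := hsymm_lim.cesaro_intervalIntegral
    (intervalIntegral.continuous_integral_neg_self hg.locallyIntegrable)
    (fun t => intervalIntegral.norm_integral_le_integral_norm_of_integrable hg _ _)
  have hintegrand : ∀ t s : ℝ,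
      Complex.exp (Complex.I * ω * ((t : ℂ) - (s : ℂ))) * f (t - s) = g (t - s) :=
    fun t s => by simp only [g, Complex.ofReal_sub]
  simp_rw [hintegrand, intervalIntegral.integral_integral_comp_sub hg.locallyIntegrable, one_div,
    ← Complex.ofReal_inv, ← Complex.real_smul]
  exact hcesaro

/-- Coarse-graining recovers the Markovian rate: for a bath correlation function `f`
with Hermitian symmetry `f(−u) = conj(f(u))` and finite correlation time (both `f`
and `u ↦ u f(u)` integrable on `[0,∞)`), the time-averaged double integral
`(1/T) ∫₀ᵀ∫₀ᵀ e^{iω(t−s)} f(t−s) ds dt` converges, as `T → ∞`, to the Fourier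
transform `∫ℝ e^{iωu} f(u) du`. -/
theorem coarseGrained_rate_tendsto_fourier
    (f : ℝ → ℂ) (hmeas : Measurable f)
    (hsym : ∀ u : ℝ, f (-u) = (starRingEnd ℂ) (f u))
    (hint : IntegrableOn f (Set.Ici 0) volume)
    (hint' : IntegrableOn (fun u : ℝ => u • f u) (Set.Ici 0) volume)
    (ω : ℝ) :
    Tendsto
      (fun T : ℝ => (1 / (T : ℂ)) *
        ∫ t in (0 : ℝ)..T, ∫ s in (0 : ℝ)..T,
          Complex.exp (Complex.I * (ω : ℂ) * ((t : ℂ) - (s : ℂ))) * f (t - s))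
      atTop
      (nhds (∫ u : ℝ, Complex.exp (Complex.I * (ω : ℂ) * (u : ℂ)) * f u)) :=
  coarseGrained_rate_tendsto_fourier_general f hsym hint ω
end
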